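/- arXiv:1311.5193 — 2 statements merged into one kernel-verified Lean document; each statement's English description precedes it below -/
import Mathlib

section
/- In the complete graph K_n with window size λ = n (unbounded memory), a set S is a TWC target set if and only if iterating the map ℓ ↦ |{v : t(v) ≤ ℓ}| + adjustments starting from |S| (with S the |S| largest-threshold vertices) eventually covers all n vertices; formally, with A[ℓ] = |{v ∈ V \ S : t(v) ≤ ℓ}|, the sequence ℓ_0 = |S|, ℓ_{r+1} = |S| + A[ℓ_r] is non-decreasing and S is a target set iff its limit equals n. -/
set_option linter.unusedVariables false

open Finset

variable {V : Type*} [Fintype V] [DecidableEq V]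

/-- `influenced G t lam S r` : set of influenced nodes after round `r`. -/
def influenced (G : SimpleGraph V) [DecidableRel G.Adj] (t : V → ℕ) (lam : ℕ)
    (S : Finset V) : ℕ → Finset V
  | 0 => S
  | r + 1 =>
    let prev := influenced G t lam S r
    let A := if r + 1 ≤ lam then prev else prev \ influenced G t lam S (r - lam)
    prev ∪ Finset.univ.filter fun v => t v ≤ (G.neighborFinset v ∩ A).card
  termination_by r => r
  decreasing_by all_goals omega

/-- `activeSet G t lam S r` : set of active nodes at round `r`. -/
def activeSet (G : SimpleGraph V) [DecidableRel G.Adj] (t : V → ℕ) (lam : ℕ)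
    (S : Finset V) (r : ℕ) : Finset V :=
  if r = 0 then ∅
  else if r ≤ lam then influenced G t lam S (r - 1)
  else influenced G t lam S (r - 1) \ influenced G t lam S (r - 1 - lam)

def isTargetSet (G : SimpleGraph V) [DecidableRel G.Adj] (t : V → ℕ) (lam : ℕ)
    (S : Finset V) : Prop :=
  ∃ r, influenced G t lam S r = Finset.univ

def pathGraph (n : ℕ) : SimpleGraph (Fin n) where
  Adj i j := i.val + 1 = j.val ∨ j.val + 1 = i.val
  symm := ⟨fun i j h => h.symm⟩
  loopless := ⟨fun i h => by rcases h with h | h <;> omega⟩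

instance (n : ℕ) : DecidableRel (pathGraph n).Adj :=
  fun i j => inferInstanceAs (Decidable (i.val + 1 = j.val ∨ j.val + 1 = i.val))

def ringGraph (n : ℕ) : SimpleGraph (Fin n) where
  Adj i j := i ≠ j ∧ ((i.val + 1) % n = j.val ∨ (j.val + 1) % n = i.val)
  symm := ⟨fun i j h => ⟨h.1.symm, h.2.symm⟩⟩
  loopless := ⟨fun i h => h.1 rfl⟩

instance (n : ℕ) : DecidableRel (ringGraph n).Adj :=
  fun i j => inferInstanceAs (Decidable (_ ∧ (_ ∨ _)))

instance : DecidableRel (⊤ : SimpleGraph V).Adj :=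
  fun a b => inferInstanceAs (Decidable (a ≠ b))


/-- The auxiliary sequence `ℓ_0 = |S|`, `ℓ_{r+1} = |S| + A[ℓ_r]`, where
`A[ℓ] = |{v ∈ V \ S : t v ≤ ℓ}|`. -/
def ellSeq (t : V → ℕ) (S : Finset V) : ℕ → ℕ
  | 0 => S.card
  | r + 1 => S.card + ((Finset.univ \ S).filter fun v => t v ≤ ellSeq t S r).card

/-! The sequence `ℓ_r` is the orbit of `|S|` under `L ↦ |S ∪ {v ∉ S : t v ≤ L}|`, a monotone
self-map of `[0, n]`, so it is non-decreasing and constant from round `n` on. In `K_n` with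
window `λ = n` the influenced set after round `r + 1 ≤ n` is exactly `S ∪ {v ∉ S : t v ≤ ℓ_r}`,
so `S` is a target set as soon as `ℓ_n = n`. Conversely, if the stable value `L = ℓ_n` is
below `n`, the set `S ∪ {v ∉ S : t v ≤ L}` has `L` elements and every vertex outside it has
threshold above `L`; no vertex outside can ever be influenced, whatever the window. -/

section Iterate

variable {f : ℕ → ℕ} {x N : ℕ}

theorem iterate_le_of_mapsTo (hfN : ∀ y ≤ N, f y ≤ N) (hxN : x ≤ N) (r : ℕ) :
    f^[r] x ≤ N := by
  induction r with
  | zero => exact hxN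
  | succ r ih => rw [Function.iterate_succ_apply']; exact hfN _ ih

theorem isFixedPt_iterate_of_mapsTo (hf : Monotone f) (hx : x ≤ f x)
    (hfN : ∀ y ≤ N, f y ≤ N) (hxN : x ≤ N) : Function.IsFixedPt f (f^[N] x) := by
  by_contra hN
  have hstrict : ∀ k ≤ N, f^[k] x < f^[k + 1] x := by
    intro k hk
    refine lt_of_le_of_ne (hf.monotone_iterate_of_le_map hx k.le_succ) fun hk' => hN ?_
    have hfix : f (f^[k] x) = f^[k] x := (Function.iterate_succ_apply' f k x).symm.trans hk'.symm
    rw [← Nat.sub_add_cancel hk, Function.iterate_add_apply, Function.iterate_fixed hfix]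
    exact hfix
  have hgrow : ∀ k ≤ N + 1, k ≤ f^[k] x := by
    intro k
    induction k with
    | zero => intro _; exact Nat.zero_le _
    | succ k ih => intro hk; exact (ih (by omega)).trans_lt (hstrict k (by omega))
  have hle := iterate_le_of_mapsTo hfN hxN (N + 1)
  have hge := hgrow (N + 1) le_rfl
  omega

theorem iterate_eq_of_le_of_mapsTo (hf : Monotone f) (hx : x ≤ f x)
    (hfN : ∀ y ≤ N, f y ≤ N) (hxN : x ≤ N) {m : ℕ} (hm : N ≤ m) :
    f^[m] x = f^[N] x := by
  rw [← Nat.sub_add_cancel hm, Function.iterate_add_apply,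
    Function.iterate_fixed (isFixedPt_iterate_of_mapsTo hf hx hfN hxN)]

theorem iterate_self_eq_of_exists (hf : Monotone f) (hx : x ≤ f x)
    (hfN : ∀ y ≤ N, f y ≤ N) (hxN : x ≤ N) (h : ∃ r, f^[r] x = N) : f^[N] x = N := by
  obtain ⟨r, hr⟩ := h
  rcases le_total r N with hrN | hNr
  · refine le_antisymm (iterate_le_of_mapsTo hfN hxN N) ?_
    calc N = f^[r] x := hr.symm
      _ ≤ f^[N] x := hf.monotone_iterate_of_le_map hx hrN
  · rwa [← iterate_eq_of_le_of_mapsTo hf hx hfN hxN hNr]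

end Iterate

section ThresholdSpan

variable (t : V → ℕ) (S : Finset V)

def thresholdSpan (L : ℕ) : Finset V :=
  S ∪ (univ \ S).filter fun v => t v ≤ L

variable {t S}

theorem mem_thresholdSpan_of_le {v : V} {L : ℕ} (hv : t v ≤ L) : v ∈ thresholdSpan t S L := by
  by_cases hvS : v ∈ S
  · exact mem_union_left _ hvS
  · exact mem_union_right _ (mem_filter.2 ⟨mem_sdiff.2 ⟨mem_univ v, hvS⟩, hv⟩)

theorem thresholdSpan_mono : Monotone (thresholdSpan t S) := fun _ _ hL =>
  union_subset_union_right fun _ hv =>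
    mem_filter.2 ⟨(mem_filter.1 hv).1, (mem_filter.1 hv).2.trans hL⟩

theorem card_thresholdSpan (L : ℕ) :
    (thresholdSpan t S L).card = S.card + ((univ \ S).filter fun v => t v ≤ L).card :=
  card_union_of_disjoint (disjoint_sdiff.mono_right (filter_subset _ _))

theorem ellSeq_eq_iterate (r : ℕ) :
    ellSeq t S r = (fun L => (thresholdSpan t S L).card)^[r] S.card := by
  induction r with
  | zero => rfl
  | succ r ih => rw [Function.iterate_succ_apply', ← ih, card_thresholdSpan, ellSeq]

theorem card_thresholdSpan_mono : Monotone fun L => (thresholdSpan t S L).card :=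
  fun _ _ hL => card_le_card (thresholdSpan_mono hL)

theorem ellSeq_monotone : Monotone (ellSeq t S) := by
  simpa only [funext ellSeq_eq_iterate] using
    card_thresholdSpan_mono.monotone_iterate_of_le_map (card_le_card subset_union_left)

theorem ellSeq_le_card (r : ℕ) : ellSeq t S r ≤ Fintype.card V := by
  cases r with
  | zero => exact card_le_univ S
  | succ r => rw [ellSeq, ← card_thresholdSpan]; exact card_le_univ _

theorem card_thresholdSpan_ellSeq_card :
    (thresholdSpan t S (ellSeq t S (Fintype.card V))).card = ellSeq t S (Fintype.card V) := by
  rw [ellSeq_eq_iterate]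
  exact isFixedPt_iterate_of_mapsTo card_thresholdSpan_mono (card_le_card subset_union_left)
    (fun _ _ => card_le_univ _) (card_le_univ S)

theorem ellSeq_card_eq_card_of_exists (h : ∃ r, ellSeq t S r = Fintype.card V) :
    ellSeq t S (Fintype.card V) = Fintype.card V := by
  simp only [ellSeq_eq_iterate] at h ⊢
  exact iterate_self_eq_of_exists card_thresholdSpan_mono (card_le_card subset_union_left)
    (fun _ _ => card_le_univ _) (card_le_univ S) h

theorem union_filter_eq_thresholdSpan {X : Finset V} {L : ℕ} (hSX : S ⊆ X)
    (hX : X ⊆ thresholdSpan t S L) :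
    X ∪ univ.filter (fun v => t v ≤ L) = thresholdSpan t S L := by
  refine subset_antisymm (union_subset hX fun v hv => ?_) fun v hv => ?_
  · exact mem_thresholdSpan_of_le (mem_filter.1 hv).2
  · rcases mem_union.1 hv with hvS | hv
    · exact mem_union_left _ (hSX hvS)
    · exact mem_union_right _ (mem_filter.2 ⟨mem_univ v, (mem_filter.1 hv).2⟩)

end ThresholdSpan

section Diffusion

variable (G : SimpleGraph V) [DecidableRel G.Adj] (t : V → ℕ) (lam : ℕ) (S : Finset V)

theorem influenced_succ (r : ℕ) :
    influenced G t lam S (r + 1) =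
      influenced G t lam S r ∪ univ.filter fun v => t v ≤
        (G.neighborFinset v ∩ (if r + 1 ≤ lam then influenced G t lam S r
          else influenced G t lam S r \ influenced G t lam S (r - lam))).card := by
  rw [influenced]

theorem influenced_subset_of_card_lt {X : Finset V} (hSX : S ⊆ X)
    (hX : ∀ v ∉ X, X.card < t v) (r : ℕ) : influenced G t lam S r ⊆ X := by
  induction r with
  | zero => rwa [influenced]
  | succ r ih =>
    rw [influenced_succ]
    refine union_subset ih fun v hv => by_contra fun hvX => ?_
    have hactive : (if r + 1 ≤ lam then influenced G t lam S r
        else influenced G t lam S r \ influenced G t lam S (r - lam)) ⊆ X := by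
      split_ifs
      · exact ih
      · exact sdiff_subset.trans ih
    exact (hX v hvX).not_ge ((mem_filter.1 hv).2.trans
      (card_le_card (inter_subset_right.trans hactive : G.neighborFinset v ∩ _ ⊆ X)))

end Diffusion

section Complete

variable (t : V → ℕ) (S : Finset V)

theorem union_filter_neighborFinset_top (X : Finset V) :
    X ∪ univ.filter (fun v => t v ≤ ((⊤ : SimpleGraph V).neighborFinset v ∩ X).card) =
      X ∪ univ.filter (fun v => t v ≤ X.card) := by
  ext v
  by_cases hvX : v ∈ X
  · simp only [mem_union, hvX, true_or]
  · have hinter : (⊤ : SimpleGraph V).neighborFinset v ∩ X = X :=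
      inter_eq_right.2 fun u hu => (SimpleGraph.mem_neighborFinset _ _ _).2
        ((SimpleGraph.top_adj v u).2 fun hvu => hvX (hvu ▸ hu))
    simp only [mem_union, mem_filter, mem_univ, true_and, hinter]

theorem influenced_top_succ_eq_thresholdSpan {r : ℕ} (hr : r + 1 ≤ Fintype.card V) :
    influenced ⊤ t (Fintype.card V) S (r + 1) = thresholdSpan t S (ellSeq t S r) := by
  induction r with
  | zero =>
    rw [influenced_succ, if_pos hr, influenced, union_filter_neighborFinset_top]
    exact union_filter_eq_thresholdSpan le_rfl subset_union_left
  | succ r ih =>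
    rw [influenced_succ, if_pos hr, ih (by omega), union_filter_neighborFinset_top,
      card_thresholdSpan]
    exact union_filter_eq_thresholdSpan subset_union_left
      (thresholdSpan_mono (ellSeq_monotone r.le_succ))

theorem card_influenced_top {r : ℕ} (hr : r ≤ Fintype.card V) :
    (influenced ⊤ t (Fintype.card V) S r).card = ellSeq t S r := by
  cases r with
  | zero => rw [influenced, ellSeq]
  | succ r => rw [influenced_top_succ_eq_thresholdSpan t S hr, card_thresholdSpan, ellSeq]

end Complete

theorem stmt14_general (t : V → ℕ) (S : Finset V) :
    (∀ r : ℕ, ellSeq t S r ≤ ellSeq t S (r + 1)) ∧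
    (isTargetSet (⊤ : SimpleGraph V) t (Fintype.card V) S ↔
      ∃ r, ellSeq t S r = Fintype.card V) := by
  set n := Fintype.card V
  refine ⟨fun r => ellSeq_monotone r.le_succ, ⟨fun ⟨R, hR⟩ => ⟨n, ?_⟩, fun h => ⟨n, ?_⟩⟩⟩
  · set L := ellSeq t S n
    have hstable : (thresholdSpan t S L).card = L := card_thresholdSpan_ellSeq_card
    have hclosed : ∀ v ∉ thresholdSpan t S L, (thresholdSpan t S L).card < t v :=
      fun v hv => by
        rw [hstable]
        exact lt_of_not_ge fun hvL => hv (mem_thresholdSpan_of_le hvL)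
    have hsub : univ ⊆ thresholdSpan t S L :=
      hR ▸ influenced_subset_of_card_lt ⊤ t n S subset_union_left hclosed R
    refine le_antisymm (ellSeq_le_card n) ?_
    calc n = (univ : Finset V).card := card_univ.symm
      _ ≤ (thresholdSpan t S L).card := card_le_card hsub
      _ = L := hstable
  · exact eq_univ_of_card _
      (by rw [card_influenced_top t S le_rfl, ellSeq_card_eq_card_of_exists h])

/-- in the complete graph with window size `λ = n` and `S` a set of
largest-threshold vertices, the sequence `ℓ_r` is non-decreasing and `S` is a
TWC target set iff the sequence reaches `n`. -/
theorem stmt14 (t : V → ℕ) (ht : ∀ v, 1 ≤ t v ∧ t v ≤ Fintype.card V - 1)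
    (S : Finset V) (hS : ∀ v ∈ S, ∀ u ∉ S, t u ≤ t v) :
    (∀ r : ℕ, ellSeq t S r ≤ ellSeq t S (r + 1)) ∧
    (isTargetSet (⊤ : SimpleGraph V) t (Fintype.card V) S ↔
      ∃ r, ellSeq t S r = Fintype.card V) :=
  stmt14_general t S
end

section
/- In a tree T rooted at ρ, the number of rounds needed for any diffusion process to stabilize is at most the diameter of T: for any target set S, if Influenced[S,r] ≠ Influenced[S,r+1] then r ≤ diam(T); hence the minimum target-set size equals min over 0 ≤ r ≤ diam(T) of the minimum size of a set influencing the root at round exactly r and all of T. -/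
set_option linter.unusedVariables false

open Finset

variable {V : Type*} [Fintype V] [DecidableEq V]

/-!
A node first influenced at round `r + 1` has a neighbour first influenced at round `r`: at
round `1` because an active node is already influenced, later because the active
neighbourhood must have grown since round `r`, and a node active at round `r + 1` but not at
round `r` was first influenced at round `r`. Following these neighbours back to round `0`
gives a path of `r + 1` edges through nodes first influenced at distinct rounds; in a tree
its length is a distance, hence at most the diameter.
-/

open SimpleGraph

namespace SimpleGraph

lemma IsAcyclic.length_eq_dist_of_isPath {W : Type*} {H : SimpleGraph W} (hH : H.IsAcyclic)
    {u v : W} {p : H.Walk u v} (hp : p.IsPath) : p.length = H.dist u v := by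
  obtain ⟨q, hq, hq_len⟩ := p.reachable.exists_path_of_dist
  have : p = q := congrArg Subtype.val ((hH.subsingleton_path u v).elim ⟨p, hp⟩ ⟨q, hq⟩)
  rw [this, hq_len]

lemma IsTree.length_le_diam_of_isPath {W : Type*} [Finite W] {H : SimpleGraph W}
    (hH : H.IsTree) {u v : W} {p : H.Walk u v} (hp : p.IsPath) : p.length ≤ H.diam := by
  have : Nonempty W := ⟨u⟩
  rw [hH.isAcyclic.length_eq_dist_of_isPath hp]
  exact dist_le_diam (H.connected_iff_ediam_ne_top.mp hH.connected)

end SimpleGraph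

section Diffusion

variable (G : SimpleGraph V) [DecidableRel G.Adj] (t : V → ℕ) (lam : ℕ) (S : Finset V)

def IsFirstInfluencedAt (v : V) (r : ℕ) : Prop :=
  v ∈ influenced G t lam S r ∧ (r = 0 ∨ v ∉ influenced G t lam S (r - 1))

lemma activeSet_succ (r : ℕ) :
    activeSet G t lam S (r + 1) = if r + 1 ≤ lam then influenced G t lam S r
      else influenced G t lam S r \ influenced G t lam S (r - lam) := by
  rw [activeSet, if_neg r.succ_ne_zero, Nat.add_sub_cancel]

lemma mem_influenced_succ_iff {v : V} {r : ℕ} :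
    v ∈ influenced G t lam S (r + 1) ↔
      v ∈ influenced G t lam S r ∨
        t v ≤ #(G.neighborFinset v ∩ activeSet G t lam S (r + 1)) := by
  rw [influenced, activeSet_succ]
  simp

lemma influenced_mono : Monotone (influenced G t lam S) :=
  monotone_nat_of_le_succ fun _ _ hv => (mem_influenced_succ_iff G t lam S).mpr (Or.inl hv)

lemma activeSet_succ_subset (r : ℕ) :
    activeSet G t lam S (r + 1) ⊆ influenced G t lam S r := by
  rw [activeSet_succ]
  split_ifs
  · exact Subset.rfl
  · exact sdiff_subset

variable {G t lam S}

lemma isFirstInfluencedAt_succ_of_mem_activeSet_of_notMem {u : V} {r : ℕ}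
    (hu : u ∈ activeSet G t lam S (r + 2)) (hu' : u ∉ activeSet G t lam S (r + 1)) :
    IsFirstInfluencedAt G t lam S u (r + 1) := by
  refine ⟨activeSet_succ_subset G t lam S _ hu, Or.inr fun hur => hu' ?_⟩
  rw [activeSet_succ] at hu ⊢
  split_ifs at hu ⊢ with h₁ h₂
  · exact hur
  · exact hur
  · omega
  · refine mem_sdiff.mpr ⟨hur, fun h => (mem_sdiff.mp hu).2 ?_⟩
    exact influenced_mono G t lam S (by omega) h

lemma IsFirstInfluencedAt.exists_adj {v : V} {r : ℕ} (htv : 1 ≤ t v)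
    (hv : IsFirstInfluencedAt G t lam S v (r + 1)) :
    ∃ u, G.Adj v u ∧ IsFirstInfluencedAt G t lam S u r := by
  obtain ⟨hv_in, hv_new⟩ := hv
  simp only [Nat.add_sub_cancel, r.succ_ne_zero, false_or] at hv_new
  have hv_thr := ((mem_influenced_succ_iff G t lam S).mp hv_in).resolve_left hv_new
  cases r with
  | zero =>
    obtain ⟨u, hu⟩ := card_pos.mp (htv.trans hv_thr)
    rw [mem_inter, mem_neighborFinset] at hu
    exact ⟨u, hu.1, activeSet_succ_subset G t lam S 0 hu.2, Or.inl rfl⟩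
  | succ r =>
    have hv_short : #(G.neighborFinset v ∩ activeSet G t lam S (r + 1)) < t v :=
      lt_of_not_ge fun h => hv_new ((mem_influenced_succ_iff G t lam S).mpr (Or.inr h))
    obtain ⟨u, hu, hu'⟩ :=
      not_subset.mp fun h => (card_le_card h).not_gt (hv_short.trans_le hv_thr)
    rw [mem_inter, mem_neighborFinset] at hu
    refine ⟨u, hu.1, isFirstInfluencedAt_succ_of_mem_activeSet_of_notMem hu.2 ?_⟩
    exact fun h => hu' (mem_inter.mpr ⟨(mem_neighborFinset G v u).mpr hu.1, h⟩)

lemma IsFirstInfluencedAt.exists_isPath (ht : ∀ v, 1 ≤ t v) {v : V} {r : ℕ}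
    (hv : IsFirstInfluencedAt G t lam S v r) :
    ∃ w, ∃ p : G.Walk v w, p.IsPath ∧ p.length = r ∧
      ∀ x ∈ p.support, x ∈ influenced G t lam S r := by
  induction r generalizing v with
  | zero => exact ⟨v, .nil, .nil, rfl, by simpa using hv.1⟩
  | succ r ih =>
    obtain ⟨u, huv, hu⟩ := hv.exists_adj (ht v)
    obtain ⟨w, p, hp, hp_len, hp_supp⟩ := ih hu
    have hv_new : v ∉ influenced G t lam S r := by simpa using hv.2
    refine ⟨w, .cons huv p, hp.cons fun h => hv_new (hp_supp v h), by simp [hp_len], ?_⟩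
    simp only [Walk.support_cons, List.mem_cons, forall_eq_or_imp]
    exact ⟨hv.1, fun x hx => influenced_mono G t lam S r.le_succ (hp_supp x hx)⟩

lemma IsFirstInfluencedAt.le_diam (hG : G.IsTree) (ht : ∀ v, 1 ≤ t v) {v : V} {r : ℕ}
    (hv : IsFirstInfluencedAt G t lam S v r) : r ≤ G.diam := by
  obtain ⟨w, p, hp, rfl, -⟩ := hv.exists_isPath ht
  exact hG.length_le_diam_of_isPath hp

lemma exists_isFirstInfluencedAt_of_mem {v : V} {r : ℕ} (hv : v ∈ influenced G t lam S r) :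
    ∃ s ≤ r, IsFirstInfluencedAt G t lam S v s := by
  induction r with
  | zero => exact ⟨0, le_rfl, hv, Or.inl rfl⟩
  | succ r ih =>
    by_cases hvr : v ∈ influenced G t lam S r
    · obtain ⟨s, hs, hvs⟩ := ih hvr
      exact ⟨s, hs.trans r.le_succ, hvs⟩
    · exact ⟨r + 1, le_rfl, hv, Or.inr hvr⟩

end Diffusion

theorem stmt18_general (G : SimpleGraph V) [DecidableRel G.Adj] (hT : G.IsTree)
    (t : V → ℕ) (ht : ∀ v, 1 ≤ t v ∧ t v ≤ G.degree v)
    (lam : ℕ) (ρ : V) :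
    (∀ (S : Finset V) (r : ℕ),
        influenced G t lam S r ≠ influenced G t lam S (r + 1) → r ≤ G.diam) ∧
    sInf { c : ℕ | ∃ S : Finset V, isTargetSet G t lam S ∧ S.card = c }
      = sInf { c : ℕ | ∃ r ≤ G.diam, ∃ S : Finset V, S.card = c ∧
          isTargetSet G t lam S ∧ ρ ∈ influenced G t lam S r ∧
          (r = 0 ∨ ρ ∉ influenced G t lam S (r - 1)) } := by
  have ht₁ : ∀ v, 1 ≤ t v := fun v => (ht v).1
  refine ⟨fun S r hne => ?_, congrArg sInf (Set.ext fun c => ⟨?_, ?_⟩)⟩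
  · obtain ⟨v, hv, hv_new⟩ :=
      not_subset.mp fun h => hne (h.antisymm' (influenced_mono G t lam S r.le_succ))
    have := IsFirstInfluencedAt.le_diam (S := S) hT ht₁ ⟨hv, Or.inr hv_new⟩
    omega
  · rintro ⟨S, ⟨R, hR⟩, rfl⟩
    obtain ⟨r, -, hρ⟩ :=
      exists_isFirstInfluencedAt_of_mem (G := G) (t := t) (lam := lam) (hR ▸ mem_univ ρ)
    exact ⟨r, hρ.le_diam hT ht₁, S, rfl, ⟨R, hR⟩, hρ⟩
  · rintro ⟨r, -, S, rfl, hS, -⟩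
    exact ⟨S, hS, rfl⟩

/-- in a tree, any diffusion process stabilizes within `diam T`
rounds (if the influenced set changes at round `r+1` then `r ≤ diam T`); hence
the minimum target-set size equals the minimum over rounds `0 ≤ r ≤ diam T` of
the minimum size of a set influencing everything whose diffusion influences the
root at round exactly `r`. -/
theorem stmt18 (G : SimpleGraph V) [DecidableRel G.Adj] (hT : G.IsTree)
    (t : V → ℕ) (ht : ∀ v, 1 ≤ t v ∧ t v ≤ G.degree v)
    (lam : ℕ) (hlam : 1 ≤ lam) (ρ : V) :
    (∀ (S : Finset V) (r : ℕ),
        influenced G t lam S r ≠ influenced G t lam S (r + 1) → r ≤ G.diam) ∧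
    sInf { c : ℕ | ∃ S : Finset V, isTargetSet G t lam S ∧ S.card = c }
      = sInf { c : ℕ | ∃ r ≤ G.diam, ∃ S : Finset V, S.card = c ∧
          isTargetSet G t lam S ∧ ρ ∈ influenced G t lam S r ∧
          (r = 0 ∨ ρ ∉ influenced G t lam S (r - 1)) } :=
  stmt18_general G hT t ht lam ρ
end
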